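/- arXiv:1101.4720 — 9 statements merged into one kernel-verified Lean document; each statement's English description precedes it below -/
import Mathlib

section
/- Let S be a Γ-semigroup and μ a non-empty fuzzy subset of S. Then μ is a fuzzy bi-ideal of S if and only if for all t in the image of μ, the level set μ_t = {x ∈ S : μ(x) ≥ t} is a bi-ideal of S. -/
theorem stmt_3 {S Γ : Type*} [Nonempty S] [Nonempty Γ]
    (mul : S → Γ → S → S)
    (assoc : ∀ (x : S) (β : Γ) (y : S) (γ : Γ) (z : S),
      mul (mul x β y) γ z = mul x β (mul y γ z))
    (μ : S → ℝ) (h01 : ∀ x, μ x ∈ Set.Icc (0:ℝ) 1) (hne : ∃ x, μ x ≠ 0) :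
    ((∀ (x y : S) (γ : Γ), min (μ x) (μ y) ≤ μ (mul x γ y)) ∧
      (∀ (x s y : S) (β γ : Γ), min (μ x) (μ y) ≤ μ (mul (mul x β s) γ y))) ↔
      (∀ t ∈ Set.range μ,
        (∀ x ∈ {x : S | t ≤ μ x}, ∀ y ∈ {x : S | t ≤ μ x}, ∀ γ : Γ,
          mul x γ y ∈ {x : S | t ≤ μ x}) ∧
        (∀ x ∈ {x : S | t ≤ μ x}, ∀ (s : S), ∀ y ∈ {x : S | t ≤ μ x}, ∀ (β γ : Γ),
          mul (mul x β s) γ y ∈ {x : S | t ≤ μ x})) := by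
  constructor
  · rintro ⟨h1, h2⟩ t _
    refine ⟨fun x hx y hy γ => ?_, fun x hx s y hy β γ => ?_⟩
    · exact le_trans (le_min hx hy) (h1 x y γ)
    · exact le_trans (le_min hx hy) (h2 x s y β γ)
  · intro h
    constructor
    · intro x y γ
      rcases min_cases (μ x) (μ y) with ⟨hm, hle⟩ | ⟨hm, hle⟩
      · rw [hm]; exact (h (μ x) ⟨x, rfl⟩).1 x (Set.mem_setOf.mpr (le_refl _)) y hle γ
      · rw [hm]; exact (h (μ y) ⟨y, rfl⟩).1 x hle.le y (Set.mem_setOf.mpr (le_refl _)) γ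
    · intro x s y β γ
      rcases min_cases (μ x) (μ y) with ⟨hm, hle⟩ | ⟨hm, hle⟩
      · rw [hm]; exact (h (μ x) ⟨x, rfl⟩).2 x (Set.mem_setOf.mpr (le_refl _)) s y hle β γ
      · rw [hm]; exact (h (μ y) ⟨y, rfl⟩).2 x hle.le s y (Set.mem_setOf.mpr (le_refl _)) β γ
end

section
/- For a non-empty fuzzy subset μ of a Γ-semigroup S, μ is a fuzzy bi-ideal of S if and only if μ∘μ ⊆ μ and μ∘χ∘μ ⊆ μ, where χ is the characteristic function of S (constantly 1). -/
/-- The convolution product of fuzzy subsets of a `Γ`-semigroup. -/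
noncomputable def fComp9 {S Γ : Type*} (mul : S → Γ → S → S) (μ σ : S → ℝ) : S → ℝ :=
  fun a => sSup {t : ℝ | ∃ (y z : S) (γ : Γ), a = mul y γ z ∧ t = min (μ y) (σ z)}

theorem stmt_9 {S Γ : Type*} [Nonempty S] [Nonempty Γ]
    (mul : S → Γ → S → S)
    (assoc : ∀ (x : S) (β : Γ) (y : S) (γ : Γ) (z : S),
      mul (mul x β y) γ z = mul x β (mul y γ z))
    (μ : S → ℝ) (h01 : ∀ x, μ x ∈ Set.Icc (0:ℝ) 1) (hne : ∃ x, μ x ≠ 0) :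
    ((∀ (x y : S) (γ : Γ), min (μ x) (μ y) ≤ μ (mul x γ y)) ∧
      (∀ (x s y : S) (β γ : Γ), min (μ x) (μ y) ≤ μ (mul (mul x β s) γ y))) ↔
      ((∀ x : S, fComp9 mul μ μ x ≤ μ x) ∧
        (∀ x : S, fComp9 mul (fComp9 mul μ (fun _ => (1:ℝ))) μ x ≤ μ x)) := by
  have hμ0 : ∀ x, (0:ℝ) ≤ μ x := fun x => (h01 x).1
  have hμ1 : ∀ x, μ x ≤ 1 := fun x => (h01 x).2
  -- the inner set for fComp μ 1
  set F : S → ℝ := fComp9 mul μ (fun _ => (1:ℝ)) with hF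
  have hFle1 : ∀ y, F y ≤ 1 := by
    intro y
    apply Real.sSup_le _ zero_le_one
    rintro t ⟨a, s, β, hy, ht⟩
    exact ht ▸ (min_le_right _ _)
  have hbdd : ∀ (f g : S → ℝ), (∀ x, f x ≤ 1) → (∀ x, g x ≤ 1) → ∀ a : S,
      BddAbove {t : ℝ | ∃ (y z : S) (γ : Γ), a = mul y γ z ∧ t = min (f y) (g z)} := by
    intro f g hf hg a
    refine ⟨1, ?_⟩
    rintro t ⟨y, z, γ, ha, ht⟩
    exact ht ▸ le_trans (min_le_left _ _) (hf y)
  constructor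
  · rintro ⟨h1, h2⟩
    constructor
    · intro x
      apply Real.sSup_le _ (hμ0 x)
      rintro t ⟨y, z, γ, hx, ht⟩
      rw [ht, hx]; exact h1 y z γ
    · intro x
      apply Real.sSup_le _ (hμ0 x)
      rintro t ⟨y, z, γ, hx, ht⟩
      rw [ht]
      by_cases hT : {t : ℝ | ∃ (a s : S) (β : Γ), y = mul a β s ∧
          t = min (μ a) (1:ℝ)}.Nonempty
      · by_contra hlt
        push_neg at hlt
        have hFy : μ x < F y := lt_of_lt_of_le hlt (min_le_left _ _)
        have hz : μ x < μ z := lt_of_lt_of_le hlt (min_le_right _ _)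
        obtain ⟨t', ht', hlt'⟩ := exists_lt_of_lt_csSup hT hFy
        obtain ⟨a, s, β, hy, hts⟩ := ht'
        rw [hts, min_eq_left (hμ1 a)] at hlt'
        have := h2 a s z β γ
        rw [← hy] at this
        rw [← hx] at this
        exact absurd this (not_le.mpr (lt_min hlt' hz))
      · have : F y = 0 := by
          rw [hF, fComp9, Set.not_nonempty_iff_eq_empty.mp hT, Real.sSup_empty]
        rw [this]
        calc min (0:ℝ) (μ z) ≤ 0 := min_le_left _ _
          _ ≤ μ x := hμ0 x
  · rintro ⟨h1, h2⟩
    constructor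
    · intro x y γ
      refine le_trans (le_csSup (hbdd μ μ hμ1 hμ1 _) ?_) (h1 (mul x γ y))
      exact ⟨x, y, γ, rfl, rfl⟩
    · intro x s y β γ
      refine le_trans ?_ (h2 (mul (mul x β s) γ y))
      have hmem : min (F (mul x β s)) (μ y) ∈ {t : ℝ | ∃ (a b : S) (γ' : Γ),
          mul (mul x β s) γ y = mul a γ' b ∧ t = min (F a) (μ b)} :=
        ⟨mul x β s, y, γ, rfl, rfl⟩
      refine le_trans ?_ (le_csSup (hbdd F μ hFle1 hμ1 _) hmem)
      apply min_le_min _ (le_refl _)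
      have : μ x = min (μ x) 1 := (min_eq_left (hμ1 x)).symm
      rw [this]
      exact le_csSup (by
        refine ⟨1, ?_⟩
        rintro t ⟨a, b, β', _, ht⟩
        exact ht ▸ min_le_right _ _) ⟨x, s, β, rfl, rfl⟩
end

section
/- Let S be a regular Γ-semigroup in which every left ideal is a two-sided ideal (left duo). Then a non-empty fuzzy subset μ of S is a fuzzy right ideal of S if and only if μ is a fuzzy bi-ideal of S. -/
theorem stmt_10 {S Γ : Type*} [Nonempty S] [Nonempty Γ]
    (mul : S → Γ → S → S)
    (assoc : ∀ (x : S) (β : Γ) (y : S) (γ : Γ) (z : S),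
      mul (mul x β y) γ z = mul x β (mul y γ z))
    (hreg : ∀ a : S, ∃ (x : S) (α β : Γ), a = mul (mul a α x) β a)
    (hduo : ∀ I : Set S, I.Nonempty →
      (∀ s : S, ∀ x ∈ I, ∀ γ : Γ, mul s γ x ∈ I) →
      (∀ x ∈ I, ∀ s : S, ∀ γ : Γ, mul x γ s ∈ I))
    (μ : S → ℝ) (h01 : ∀ x, μ x ∈ Set.Icc (0:ℝ) 1) (hne : ∃ x, μ x ≠ 0) :
    (∀ (x y : S) (γ : Γ), μ x ≤ μ (mul x γ y)) ↔
      ((∀ (x y : S) (γ : Γ), min (μ x) (μ y) ≤ μ (mul x γ y)) ∧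
        (∀ (x s y : S) (β γ : Γ), min (μ x) (μ y) ≤ μ (mul (mul x β s) γ y))) := by
  constructor
  · intro h
    refine ⟨fun x y γ => le_trans (min_le_left _ _) (h x y γ), fun x s y β γ => ?_⟩
    exact le_trans (min_le_left _ _) (le_trans (h x s β) (h (mul x β s) y γ))
  · rintro ⟨_, hbi⟩ x y γ
    obtain ⟨z, α, β, hx⟩ := hreg x
    -- the left ideal SΓx
    set I : Set S := {w | ∃ t δ, w = mul t δ x} with hI
    have hne' : I.Nonempty := ⟨mul (Classical.arbitrary S) (Classical.arbitrary Γ) x,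
      Classical.arbitrary S, Classical.arbitrary Γ, rfl⟩
    have hleft : ∀ s : S, ∀ w ∈ I, ∀ δ : Γ, mul s δ w ∈ I := by
      rintro s w ⟨t, δ', rfl⟩ δ
      exact ⟨mul s δ t, δ', (assoc s δ t δ' x).symm⟩
    have hmem : mul z β x ∈ I := ⟨z, β, rfl⟩
    obtain ⟨t, δ, ht⟩ := hduo I hne' hleft (mul z β x) hmem y γ
    have key : mul x γ y = mul (mul x α t) δ x := by
      calc mul x γ y = mul (mul (mul x α z) β x) γ y := by rw [← hx]
        _ = mul x α (mul (mul z β x) γ y) := by rw [assoc, assoc, ← assoc z β x γ y]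
        _ = mul x α (mul t δ x) := by rw [ht]
        _ = mul (mul x α t) δ x := (assoc x α t δ x).symm
    rw [key]
    simpa using hbi x t x α δ
end

section
/- Let S be a regular left duo Γ-semigroup. Then a fuzzy subsemigroup μ of S is a fuzzy bi-ideal of S if and only if μ is a fuzzy (1,2)-ideal of S. -/
theorem stmt_11 {S Γ : Type*} [Nonempty S] [Nonempty Γ]
    (mul : S → Γ → S → S)
    (assoc : ∀ (x : S) (β : Γ) (y : S) (γ : Γ) (z : S),
      mul (mul x β y) γ z = mul x β (mul y γ z))
    (hreg : ∀ a : S, ∃ (x : S) (α β : Γ), a = mul (mul a α x) β a)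
    (hduo : ∀ I : Set S, I.Nonempty →
      (∀ s : S, ∀ x ∈ I, ∀ γ : Γ, mul s γ x ∈ I) →
      (∀ x ∈ I, ∀ s : S, ∀ γ : Γ, mul x γ s ∈ I))
    (μ : S → ℝ) (h01 : ∀ x, μ x ∈ Set.Icc (0:ℝ) 1)
    (hsub : ∀ (x y : S) (γ : Γ), min (μ x) (μ y) ≤ μ (mul x γ y)) :
    (∀ (x s y : S) (β γ : Γ), min (μ x) (μ y) ≤ μ (mul (mul x β s) γ y)) ↔
      (∀ (x ω y z : S) (α β γ : Γ),
        min (μ x) (min (μ y) (μ z)) ≤ μ (mul (mul x α ω) β (mul y γ z))) := by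
  constructor
  · intro hbi x ω y z α β γ
    calc min (μ x) (min (μ y) (μ z))
        ≤ min (μ x) (μ (mul y γ z)) := by
          exact min_le_min le_rfl (hsub y z γ)
      _ ≤ μ (mul (mul x α ω) β (mul y γ z)) := hbi x ω (mul y γ z) α β
  · intro h12 x s y β γ
    -- the left ideal S Γ y
    set I : Set S := {t | ∃ (q : S) (δ : Γ), t = mul q δ y} with hI
    obtain ⟨p, α, β', hy⟩ := hreg y
    have hne : I.Nonempty := ⟨mul (mul y α p) β' y, mul y α p, β', rfl⟩
    have hleft : ∀ s : S, ∀ t ∈ I, ∀ γ : Γ, mul s γ t ∈ I := by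
      rintro s' _ ⟨q, δ, rfl⟩ γ'
      exact ⟨mul s' γ' q, δ, (assoc s' γ' q δ y).symm⟩
    have hright := hduo I hne hleft
    -- s γ (y α p) = (s γ y) α p ∈ I
    obtain ⟨q, δ, hq⟩ := hright (mul s γ y) ⟨s, γ, rfl⟩ p α
    have key : mul (mul x β s) γ y = mul (mul x β q) δ (mul y β' y) := by
      conv_lhs => rw [hy]
      rw [assoc x β s, ← assoc s γ (mul y α p), ← assoc s γ y, hq,
        assoc q δ y, ← assoc x β q]
    rw [key]
    have := h12 x q y y β δ β'
    calc min (μ x) (μ y) = min (μ x) (min (μ y) (μ y)) := by rw [min_self]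
      _ ≤ _ := this
end

section
/- A Γ-semigroup S is intra-regular if and only if for every fuzzy ideal μ of S and every a ∈ S, there exists β ∈ Γ with μ(a) = μ(aβa). -/
theorem stmt_13 {S Γ : Type*} [Nonempty S] [Nonempty Γ]
    (mul : S → Γ → S → S)
    (assoc : ∀ (x : S) (β : Γ) (y : S) (γ : Γ) (z : S),
      mul (mul x β y) γ z = mul x β (mul y γ z)) :
    (∀ a : S, ∃ (x y : S) (α β γ : Γ), a = mul (mul (mul x α a) β a) γ y) ↔
      (∀ μ : S → ℝ, (∀ x, μ x ∈ Set.Icc (0:ℝ) 1) → (∃ x, μ x ≠ 0) →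
        (∀ (x y : S) (γ : Γ), μ y ≤ μ (mul x γ y)) →
        (∀ (x y : S) (γ : Γ), μ x ≤ μ (mul x γ y)) →
        ∀ a : S, ∃ β : Γ, μ a = μ (mul a β a)) := by
  classical
  constructor
  · -- forward direction
    intro hreg μ hrange hne hleft hright a
    obtain ⟨x, y, α, β, γ, h⟩ := hreg a
    refine ⟨β, le_antisymm (hright a a β) ?_⟩
    have h1 : μ (mul a β a) ≤ μ (mul x α (mul a β a)) := hleft x (mul a β a) α
    have h2 : mul x α (mul a β a) = mul (mul x α a) β a := (assoc x α a β a).symm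
    have h3 : μ (mul (mul x α a) β a) ≤ μ (mul (mul (mul x α a) β a) γ y) :=
      hright (mul (mul x α a) β a) y γ
    rw [h2] at h1
    calc μ (mul a β a) ≤ μ (mul (mul (mul x α a) β a) γ y) := le_trans h1 h3
      _ = μ a := by rw [← h]
  · -- converse
    intro hfz a
    -- J : ideal generated by {a β a : β ∈ Γ}
    set P : S → Prop := fun z =>
      (∃ β : Γ, z = mul a β a) ∨
      (∃ (s : S) (γ β : Γ), z = mul s γ (mul a β a)) ∨
      (∃ (s : S) (γ β : Γ), z = mul (mul a β a) γ s) ∨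
      (∃ (s t : S) (γ δ β : Γ), z = mul (mul s γ (mul a β a)) δ t) with hP
    have closL : ∀ (x z : S) (γ : Γ), P z → P (mul x γ z) := by
      intro x z γ hz
      rcases hz with ⟨β, rfl⟩ | ⟨s, δ, β, rfl⟩ | ⟨s, δ, β, rfl⟩ | ⟨s, t, δ, ε, β, rfl⟩
      · exact Or.inr (Or.inl ⟨x, γ, β, rfl⟩)
      · exact Or.inr (Or.inl ⟨mul x γ s, δ, β, by rw [assoc]⟩)
      · exact Or.inr (Or.inr (Or.inr ⟨x, s, γ, δ, β, by simp only [assoc]⟩))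
      · exact Or.inr (Or.inr (Or.inr ⟨mul x γ s, t, δ, ε, β, by simp only [assoc]⟩))
    have closR : ∀ (z y : S) (γ : Γ), P z → P (mul z γ y) := by
      intro z y γ hz
      rcases hz with ⟨β, rfl⟩ | ⟨s, δ, β, rfl⟩ | ⟨s, δ, β, rfl⟩ | ⟨s, t, δ, ε, β, rfl⟩
      · exact Or.inr (Or.inr (Or.inl ⟨y, γ, β, rfl⟩))
      · exact Or.inr (Or.inr (Or.inr ⟨s, y, δ, γ, β, rfl⟩))
      · exact Or.inr (Or.inr (Or.inl ⟨mul s γ y, δ, β, by rw [assoc]⟩))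
      · exact Or.inr (Or.inr (Or.inr ⟨s, mul t γ y, δ, ε, β, by simp only [assoc]⟩))
    set μ : S → ℝ := fun z => if P z then 1 else 0 with hμ
    have hone : ∀ z, P z → μ z = 1 := by intro z hz; simp [hμ, hz]
    have hrange : ∀ x, μ x ∈ Set.Icc (0:ℝ) 1 := by
      intro x; by_cases h : P x <;> simp [hμ, h]
    have hne : ∃ x, μ x ≠ 0 := by
      obtain ⟨β0⟩ := ‹Nonempty Γ›
      exact ⟨mul a β0 a, by rw [hone _ (Or.inl ⟨β0, rfl⟩)]; norm_num⟩
    have hleft : ∀ (x y : S) (γ : Γ), μ y ≤ μ (mul x γ y) := by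
      intro x y γ
      by_cases h : P y
      · rw [hone _ h, hone _ (closL x y γ h)]
      · simp only [hμ, h, if_false]; positivity
    have hright : ∀ (x y : S) (γ : Γ), μ x ≤ μ (mul x γ y) := by
      intro x y γ
      by_cases h : P x
      · rw [hone _ h, hone _ (closR x y γ h)]
      · simp only [hμ, h, if_false]; positivity
    obtain ⟨β, hβ⟩ := hfz μ hrange hne hleft hright a
    have haJ : P a := by
      by_contra hc
      rw [hone _ (Or.inl ⟨β, rfl⟩)] at hβ
      simp [hμ, hc] at hβ
    rcases haJ with ⟨β', h⟩ | ⟨s, δ, β', h⟩ | ⟨s, δ, β', h⟩ | ⟨s, t, δ, ε, β', h⟩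
    · -- a = a β' a
      exact ⟨a, a, β', β', β', by rw [← h, ← h, ← h]⟩
    · -- a = s δ (a β' a)
      refine ⟨mul s δ s, a, δ, β', β', ?_⟩
      have key : mul (mul (mul (mul s δ s) δ a) β' a) β' a
          = mul s δ (mul (mul s δ (mul a β' a)) β' a) := by simp only [assoc]
      rw [key, ← h, ← h]
    · -- a = (a β' a) δ s
      refine ⟨a, mul s δ s, β', β', δ, ?_⟩
      have h' : a = mul a β' (mul a δ s) := h.trans (assoc a β' a δ s)
      have key : mul (mul (mul a β' a) β' a) δ (mul s δ s)
          = mul a β' (mul (mul a β' (mul a δ s)) δ s) := by simp only [assoc]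
      rw [key, ← h', ← h']
    · -- a = (s δ (a β' a)) ε t
      refine ⟨s, t, δ, β', ε, h.trans ?_⟩
      simp only [assoc]
end

section
/- If S is a Γ-semigroup that is both regular and intra-regular, and μ₁, μ₂ are fuzzy bi-ideals of S, then μ₁∘μ₂ ⊇ μ₁∩μ₂, i.e., (μ₁∘μ₂)(a) ≥ min{μ₁(a), μ₂(a)} for all a ∈ S. -/
/-- The convolution product of fuzzy subsets of a `Γ`-semigroup. -/
noncomputable def fComp14 {S Γ : Type*} (mul : S → Γ → S → S) (μ σ : S → ℝ) : S → ℝ :=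
  fun a => sSup {t : ℝ | ∃ (y z : S) (γ : Γ), a = mul y γ z ∧ t = min (μ y) (σ z)}

theorem stmt_14 {S Γ : Type*} [Nonempty S] [Nonempty Γ]
    (mul : S → Γ → S → S)
    (assoc : ∀ (x : S) (β : Γ) (y : S) (γ : Γ) (z : S),
      mul (mul x β y) γ z = mul x β (mul y γ z))
    (hreg : ∀ a : S, ∃ (x : S) (α β : Γ), a = mul (mul a α x) β a)
    (hintra : ∀ a : S, ∃ (y z : S) (γ δ σ : Γ), a = mul (mul (mul y γ a) δ a) σ z)
    (μ₁ μ₂ : S → ℝ)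
    (h01₁ : ∀ x, μ₁ x ∈ Set.Icc (0:ℝ) 1) (h01₂ : ∀ x, μ₂ x ∈ Set.Icc (0:ℝ) 1)
    (hμ₁ : (∀ (x y : S) (γ : Γ), min (μ₁ x) (μ₁ y) ≤ μ₁ (mul x γ y)) ∧
      (∀ (x s y : S) (β γ : Γ), min (μ₁ x) (μ₁ y) ≤ μ₁ (mul (mul x β s) γ y)))
    (hμ₂ : (∀ (x y : S) (γ : Γ), min (μ₂ x) (μ₂ y) ≤ μ₂ (mul x γ y)) ∧
      (∀ (x s y : S) (β γ : Γ), min (μ₂ x) (μ₂ y) ≤ μ₂ (mul (mul x β s) γ y))) :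
    ∀ a : S, min (μ₁ a) (μ₂ a) ≤ fComp14 mul μ₁ μ₂ a := by
  intro a
  obtain ⟨x, α, β, hr⟩ := hreg a
  obtain ⟨y, z, γ, δ, σ, hi⟩ := hintra a
  set P : S := mul (mul a α x) β (mul y γ a) with hP
  set Q : S := mul (mul a σ (mul z α x)) β a with hQ
  -- a = P δ Q
  have hdecomp : a = mul P δ Q := by
    have h1 : mul P δ Q = mul (mul a α x) β (mul (mul y γ a) δ Q) := assoc _ _ _ _ _
    have h2 : mul (mul y γ a) δ Q
        = mul (mul (mul (mul (mul y γ a) δ a) σ z) α x) β a := by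
      rw [assoc (mul (mul (mul y γ a) δ a) σ z) α x β a,
        assoc (mul (mul y γ a) δ a) σ z α (mul x β a),
        assoc (mul y γ a) δ a σ (mul z α (mul x β a)),
        hQ, assoc a σ (mul z α x) β a, assoc z α x β a]
    rw [h1, h2, ← hi, ← hr, ← hr]
  -- μ₁ P ≥ μ₁ a
  have hP' : P = mul (mul a α (mul x β y)) γ a := by
    rw [hP, assoc a α (mul x β y) γ a, assoc x β y γ a, assoc a α x β (mul y γ a)]
  have hμP : μ₁ a ≤ μ₁ P := by
    have := hμ₁.2 a (mul x β y) a α γ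
    rw [← hP'] at this
    simpa using this
  have hμQ : μ₂ a ≤ μ₂ Q := by
    have := hμ₂.2 a (mul z α x) a σ β
    rw [← hQ] at this
    simpa using this
  -- conclude
  have hmem : min (μ₁ P) (μ₂ Q) ∈
      {t : ℝ | ∃ (p q : S) (g : Γ), a = mul p g q ∧ t = min (μ₁ p) (μ₂ q)} :=
    ⟨P, Q, δ, hdecomp, rfl⟩
  have hbdd : BddAbove {t : ℝ | ∃ (p q : S) (g : Γ), a = mul p g q ∧ t = min (μ₁ p) (μ₂ q)} := by
    refine ⟨1, fun t ht => ?_⟩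
    obtain ⟨p, q, g, -, rfl⟩ := ht
    exact min_le_of_left_le (h01₁ p).2
  calc min (μ₁ a) (μ₂ a) ≤ min (μ₁ P) (μ₂ Q) := min_le_min hμP hμQ
    _ ≤ fComp14 mul μ₁ μ₂ a := le_csSup hbdd hmem
end

section
/- A Γ-semigroup S is left simple if and only if every fuzzy left ideal of S is a constant function. -/
theorem stmt_15 {S Γ : Type*} [Nonempty S] [Nonempty Γ]
    (mul : S → Γ → S → S)
    (assoc : ∀ (x : S) (β : Γ) (y : S) (γ : Γ) (z : S),
      mul (mul x β y) γ z = mul x β (mul y γ z)) :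
    (∀ a b : S, ∃ (x : S) (α : Γ), b = mul x α a) ↔
      (∀ μ : S → ℝ, (∀ x, μ x ∈ Set.Icc (0:ℝ) 1) → (∃ x, μ x ≠ 0) →
        (∀ (x y : S) (γ : Γ), μ y ≤ μ (mul x γ y)) →
        ∀ a b : S, μ a = μ b) := by
  constructor
  · intro h μ _ _ hli a b
    obtain ⟨x, α, hx⟩ := h a b
    obtain ⟨y, β, hy⟩ := h b a
    apply le_antisymm
    · rw [hx]; exact hli x a α
    · rw [hy]; exact hli y b β
  · intro h a b
    classical
    obtain ⟨s⟩ := ‹Nonempty S›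
    obtain ⟨γ0⟩ := ‹Nonempty Γ›
    set μ : S → ℝ := fun c => if ∃ x α, c = mul x α a then 1 else 0 with hμ
    have hIcc : ∀ x, μ x ∈ Set.Icc (0:ℝ) 1 := by
      intro x; simp only [hμ]; split <;> norm_num
    have hne : ∃ x, μ x ≠ 0 := by
      refine ⟨mul s γ0 a, ?_⟩
      simp only [hμ]
      rw [if_pos ⟨s, γ0, rfl⟩]; norm_num
    have hli : ∀ (x y : S) (γ : Γ), μ y ≤ μ (mul x γ y) := by
      intro x y γ
      simp only [hμ]
      split
      · next hy =>
        obtain ⟨u, β, rfl⟩ := hy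
        rw [if_pos ⟨mul x γ u, β, (assoc x γ u β a).symm⟩]
      · split <;> norm_num
    have key := h μ hIcc hne hli b (mul s γ0 a)
    simp only [hμ] at key
    by_cases hb : ∃ x α, b = mul x α a
    · exact hb
    · exfalso
      rw [if_neg hb, if_pos ⟨s, γ0, rfl⟩] at key
      norm_num at key
end

section
/- In a left simple Γ-semigroup S, every fuzzy bi-ideal of S is a fuzzy right ideal of S. -/
theorem stmt_16 {S Γ : Type*} [Nonempty S] [Nonempty Γ]
    (mul : S → Γ → S → S)
    (assoc : ∀ (x : S) (β : Γ) (y : S) (γ : Γ) (z : S),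
      mul (mul x β y) γ z = mul x β (mul y γ z))
    (hls : ∀ a b : S, ∃ (x : S) (γ : Γ), b = mul x γ a)
    (μ : S → ℝ) (h01 : ∀ x, μ x ∈ Set.Icc (0:ℝ) 1)
    (hμ : (∀ (x y : S) (γ : Γ), min (μ x) (μ y) ≤ μ (mul x γ y)) ∧
      (∀ (x s y : S) (β γ : Γ), min (μ x) (μ y) ≤ μ (mul (mul x β s) γ y))) :
    ∀ (x y : S) (γ : Γ), μ x ≤ μ (mul x γ y) := by
  intro x y γ
  obtain ⟨z, δ, hz⟩ := hls x y
  have : mul x γ y = mul (mul x γ z) δ x := by rw [hz, assoc]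
  rw [this]
  have := hμ.2 x z x γ δ
  simpa using this
end

section
/- A non-empty fuzzy subset μ of a Γ-semigroup S is a fuzzy quasi ideal of S if and only if μ = (μ ∪ (μ∘χ)) ∩ ((χ∘μ) ∪ μ); moreover the intersection of any fuzzy right ideal with any fuzzy left ideal of S is a fuzzy quasi ideal of S. -/
/-- The convolution product of fuzzy subsets of a `Γ`-semigroup. -/
noncomputable def fComp18 {S Γ : Type*} (mul : S → Γ → S → S) (μ σ : S → ℝ) : S → ℝ :=
  fun a => sSup {t : ℝ | ∃ (y z : S) (γ : Γ), a = mul y γ z ∧ t = min (μ y) (σ z)}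

theorem stmt_18 {S Γ : Type*} [Nonempty S] [Nonempty Γ]
    (mul : S → Γ → S → S)
    (assoc : ∀ (x : S) (β : Γ) (y : S) (γ : Γ) (z : S),
      mul (mul x β y) γ z = mul x β (mul y γ z)) :
    (∀ μ : S → ℝ, (∀ x, μ x ∈ Set.Icc (0:ℝ) 1) → (∃ x, μ x ≠ 0) →
      ((∀ a : S,
          min (fComp18 mul μ (fun _ => (1:ℝ)) a) (fComp18 mul (fun _ => (1:ℝ)) μ a) ≤ μ a) ↔
        (∀ x : S, μ x =
          min (max (μ x) (fComp18 mul μ (fun _ => (1:ℝ)) x))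
              (max (fComp18 mul (fun _ => (1:ℝ)) μ x) (μ x))))) ∧
    (∀ μ ν : S → ℝ,
      (∀ x, μ x ∈ Set.Icc (0:ℝ) 1) → (∀ x, ν x ∈ Set.Icc (0:ℝ) 1) →
      (∀ (x y : S) (γ : Γ), μ x ≤ μ (mul x γ y)) →
      (∀ (x y : S) (γ : Γ), ν y ≤ ν (mul x γ y)) →
      (∀ a : S,
        min (fComp18 mul (fun x => min (μ x) (ν x)) (fun _ => (1:ℝ)) a)
            (fComp18 mul (fun _ => (1:ℝ)) (fun x => min (μ x) (ν x)) a)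
          ≤ min (μ a) (ν a))) := by
  constructor
  · intro μ _ _
    constructor
    · intro h x
      set A := fComp18 mul μ (fun _ => (1:ℝ)) x with hA
      set B := fComp18 mul (fun _ => (1:ℝ)) μ x with hB
      refine le_antisymm (le_min (le_max_left _ _) (le_max_right _ _)) ?_
      rcases le_or_gt A (μ x) with hAx | hAx
      · exact le_trans (min_le_left _ _) (max_le le_rfl hAx)
      rcases le_or_gt B (μ x) with hBx | hBx
      · exact le_trans (min_le_right _ _) (max_le hBx le_rfl)
      · have : min (max (μ x) A) (max B (μ x)) = min A B := by
          rw [max_eq_right hAx.le, max_eq_left hBx.le]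
        rw [this]; exact h x
    · intro h a
      rw [h a]
      exact le_min (le_trans (min_le_left _ _) (le_max_right _ _))
        (le_trans (min_le_right _ _) (le_max_left _ _))
  · intro μ ν hμ hν hr hl a
    have h1 : fComp18 mul (fun x => min (μ x) (ν x)) (fun _ => (1:ℝ)) a ≤ μ a := by
      apply Real.sSup_le
      · rintro t ⟨y, z, γ, rfl, rfl⟩
        exact le_trans (min_le_left _ _) (le_trans (min_le_left _ _) (hr y z γ))
      · exact (hμ a).1
    have h2 : fComp18 mul (fun _ => (1:ℝ)) (fun x => min (μ x) (ν x)) a ≤ ν a := by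
      apply Real.sSup_le
      · rintro t ⟨y, z, γ, rfl, rfl⟩
        exact le_trans (min_le_right _ _) (le_trans (min_le_right _ _) (hl y z γ))
      · exact (hν a).1
    exact min_le_min h1 h2
end
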